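/- Let t be a formal power series with z^2 = t(1-t)^2 and t = z^2 + O(z^4) (the unique such power series solution). Then the generating function f_k(z) = Σ_n a_{n,k} z^n for Deutsch paths ending at level k equals z^k / (1-t)^{k+1}. -/

import Mathlib

/-- A Deutsch step: up-step 1 or a down-step -1, -3, -5, .... -/
def DeutschStep (s : ℤ) : Prop := s = 1 ∨ ∃ j : ℕ, s = -(2 * j + 1)

/-- A Deutsch path: all steps are Deutsch steps and all partial sums (heights)
are nonnegative. -/
def IsDeutschPath (p : List ℤ) : Prop :=
  (∀ s ∈ p, DeutschStep s) ∧ ∀ m : ℕ, 0 ≤ (p.take m).sum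

/-- Number of Deutsch paths from (0,0) to (n,k). -/
noncomputable def deutschCount (n k : ℕ) : ℕ :=
  Nat.card {p : List ℤ // p.length = n ∧ IsDeutschPath p ∧ p.sum = (k : ℤ)}

/-!
Splitting a path by its last step gives `a (n+1) (k+1) = a n k + a (n+1) (k+3)` and
`a (n+1) 0 = a (n+1) 2`: either the last step is an up-step, or lowering it by `2` is a bijection
with the paths ending two levels lower whose last step is a down-step (at level `0` every path
ends with a down-step). Hence `f 0 = 1 + f 2` and `f (k+1) = z f k + f (k+3)`, and `z ^ k ∣ f k`.
This system has at most one solution: the difference `D` of two solutions satisfies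
`z ^ (k + d) ∣ D k` for every `d`, by induction on `d` and then on `k`. With `u = 1 / (1 - t)`,
the equation `t (1 - t) ^ 2 = z ^ 2` reads `u = 1 + z ^ 2 u ^ 3`, which says exactly that
`f k = z ^ k u ^ (k + 1)` is a solution.
-/

def IsDeutschPathTo (n k : ℕ) (p : List ℤ) : Prop :=
  p.length = n ∧ IsDeutschPath p ∧ p.sum = k

abbrev DeutschPath (n k : ℕ) : Type := {p : List ℤ // IsDeutschPathTo n k p}

theorem deutschCount_eq_card (n k : ℕ) : deutschCount n k = Nat.card (DeutschPath n k) := rfl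

namespace DeutschStep

variable {s : ℤ}

theorem le_one (h : DeutschStep s) : s ≤ 1 := by
  rcases h with rfl | ⟨j, rfl⟩ <;> omega

theorem sub_two (h : DeutschStep s) : DeutschStep (s - 2) := by
  rcases h with rfl | ⟨j, rfl⟩
  · exact Or.inr ⟨0, by norm_num⟩
  · exact Or.inr ⟨j + 1, by push_cast; ring⟩

theorem add_two (h : DeutschStep s) (hs : s ≠ 1) : DeutschStep (s + 2) := by
  rcases h with rfl | ⟨_ | j, rfl⟩
  · exact absurd rfl hs
  · exact Or.inl (by norm_num)
  · exact Or.inr ⟨j, by push_cast; ring⟩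

end DeutschStep

namespace IsDeutschPath

variable {p : List ℤ}

theorem sum_le_length (hp : IsDeutschPath p) : p.sum ≤ p.length := by
  simpa using List.sum_le_card_nsmul p 1 fun s hs => (hp.1 s hs).le_one

theorem take (hp : IsDeutschPath p) (m : ℕ) : IsDeutschPath (p.take m) :=
  ⟨fun s hs => hp.1 s (List.mem_of_mem_take hs), fun _ => List.take_take ▸ hp.2 _⟩

theorem neg_length_le_of_mem (hp : IsDeutschPath p) {x : ℤ} (hx : x ∈ p) :
    -(p.length : ℤ) ≤ x := by
  obtain ⟨a, b, rfl⟩ := List.append_of_mem hx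
  have h_prefix : 0 ≤ a.sum + x := by
    simpa [List.take_append, List.take_of_length_le (Nat.le_succ _)] using hp.2 (a.length + 1)
  have ha : a.sum ≤ a.length := by simpa using (hp.take a.length).sum_le_length
  simp only [List.length_append, List.length_cons]
  omega

end IsDeutschPath

theorem isDeutschPath_append_singleton {q : List ℤ} {s : ℤ} :
    IsDeutschPath (q ++ [s]) ↔ IsDeutschPath q ∧ DeutschStep s ∧ 0 ≤ q.sum + s := by
  constructor
  · intro hp
    exact ⟨by simpa using hp.take q.length, hp.1 s (by simp),
      by simpa using hp.2 (q.length + 1)⟩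
  · rintro ⟨hq, hs, hsum⟩
    refine ⟨by simpa [or_imp, forall_and] using ⟨hq.1, hs⟩, fun m => ?_⟩
    rcases le_or_gt m q.length with hm | hm
    · simpa [List.take_append, Nat.sub_eq_zero_of_le hm] using hq.2 m
    · rw [List.take_of_length_le (by rw [List.length_append, List.length_singleton]; omega)]
      simpa using hsum

theorem List.exists_eq_append_singleton_of_length_eq_succ {α : Type*} {l : List α} {n : ℕ}
    (h : l.length = n + 1) : ∃ q s, l = q ++ [s] := by
  rcases List.eq_nil_or_concat l with rfl | ⟨q, s, rfl⟩
  · simp at h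
  · exact ⟨q, s, List.concat_eq_append⟩

namespace IsDeutschPathTo

variable {n k : ℕ} {p q : List ℤ} {s : ℤ}

theorem append_singleton_iff :
    IsDeutschPathTo (n + 1) k (q ++ [s]) ↔
      q.length = n ∧ IsDeutschPath q ∧ DeutschStep s ∧ q.sum + s = k := by
  simp only [IsDeutschPathTo, isDeutschPath_append_singleton, List.length_append,
    List.length_singleton, List.sum_append, List.sum_singleton, Nat.add_right_cancel_iff]
  constructor
  · rintro ⟨hl, ⟨hq, hs, -⟩, hsum⟩
    exact ⟨hl, hq, hs, hsum⟩
  · rintro ⟨hl, hq, hs, hsum⟩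
    exact ⟨hl, ⟨hq, hs, hsum ▸ k.cast_nonneg⟩, hsum⟩

theorem exists_eq_append_singleton (hp : IsDeutschPathTo (n + 1) k p) :
    ∃ q s, p = q ++ [s] ∧
      q.length = n ∧ IsDeutschPath q ∧ DeutschStep s ∧ q.sum + s = k := by
  obtain ⟨q, s, rfl⟩ := List.exists_eq_append_singleton_of_length_eq_succ hp.1
  exact ⟨q, s, rfl, append_singleton_iff.1 hp⟩

theorem getLast?_ne_some_one_of_zero (hp : IsDeutschPathTo (n + 1) 0 p) :
    p.getLast? ≠ some 1 := by
  obtain ⟨q, s, rfl, -, hq, -, hsum⟩ := hp.exists_eq_append_singleton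
  have hq_nonneg := hq.2 q.length
  rw [List.take_length] at hq_nonneg
  simp only [List.getLast?_concat, ne_eq, Option.some.injEq]
  omega

theorem modifyLast_sub_two (hp : IsDeutschPathTo (n + 1) (k + 2) p) :
    IsDeutschPathTo (n + 1) k (p.modifyLast (· - 2)) ∧
      (p.modifyLast (· - 2)).getLast? ≠ some 1 := by
  obtain ⟨q, s, rfl, hl, hq, hs, hsum⟩ := hp.exists_eq_append_singleton
  have hs_le := hs.le_one
  rw [List.modifyLast_concat, List.getLast?_concat, append_singleton_iff]
  push_cast at hsum
  exact ⟨⟨hl, hq, hs.sub_two, by omega⟩, by rw [ne_eq, Option.some.injEq]; omega⟩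

theorem modifyLast_add_two (hp : IsDeutschPathTo (n + 1) k p) (hlast : p.getLast? ≠ some 1) :
    IsDeutschPathTo (n + 1) (k + 2) (p.modifyLast (· + 2)) := by
  obtain ⟨q, s, rfl, hl, hq, hs, hsum⟩ := hp.exists_eq_append_singleton
  rw [List.getLast?_concat, ne_eq, Option.some.injEq] at hlast
  rw [List.modifyLast_concat, append_singleton_iff]
  exact ⟨hl, hq, hs.add_two hlast, by push_cast; omega⟩

theorem dropLast (hp : IsDeutschPathTo (n + 1) (k + 1) p) (hlast : p.getLast? = some 1) :
    IsDeutschPathTo n k p.dropLast := by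
  obtain ⟨q, s, rfl, hl, hq, -, hsum⟩ := hp.exists_eq_append_singleton
  rw [List.getLast?_concat, Option.some.injEq] at hlast
  subst hlast
  rw [List.dropLast_concat]
  exact ⟨hl, hq, by push_cast at hsum; omega⟩

theorem append_one (hp : IsDeutschPathTo n k p) : IsDeutschPathTo (n + 1) (k + 1) (p ++ [1]) :=
  append_singleton_iff.2 ⟨hp.1, hp.2.1, Or.inl rfl, by rw [hp.2.2]; push_cast; ring⟩

end IsDeutschPathTo

instance (n k : ℕ) : Finite (DeutschPath n k) := by
  refine Set.Finite.to_subtype <|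
    ((List.finite_length_eq (Set.Icc (-(n : ℤ)) 1) n).image (List.map Subtype.val)).subset ?_
  intro p hp
  have hbound : ∀ x ∈ p, x ∈ Set.Icc (-(n : ℤ)) 1 := fun x hx =>
    ⟨hp.1 ▸ hp.2.1.neg_length_le_of_mem hx, (hp.2.1.1 x hx).le_one⟩
  lift p to List (Set.Icc (-(n : ℤ)) 1) using hbound
  exact ⟨p, by simpa using hp.1, rfl⟩

namespace DeutschPath

def lowerLastEquiv (n k : ℕ) :
    DeutschPath (n + 1) (k + 2) ≃ {p : DeutschPath (n + 1) k // p.1.getLast? ≠ some 1} where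
  toFun p := ⟨⟨_, p.2.modifyLast_sub_two.1⟩, p.2.modifyLast_sub_two.2⟩
  invFun p := ⟨_, p.1.2.modifyLast_add_two p.2⟩
  left_inv p := by
    obtain ⟨q, s, hp, -⟩ := p.2.exists_eq_append_singleton
    ext1
    simp [hp, List.modifyLast_concat]
  right_inv p := by
    obtain ⟨q, s, hp, -⟩ := p.1.2.exists_eq_append_singleton
    ext1; ext1
    simp [hp, List.modifyLast_concat]

def appendOneEquiv (n k : ℕ) :
    DeutschPath n k ≃ {p : DeutschPath (n + 1) (k + 1) // p.1.getLast? = some 1} where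
  toFun q := ⟨⟨_, q.2.append_one⟩, List.getLast?_concat⟩
  invFun p := ⟨_, p.1.2.dropLast p.2⟩
  left_inv q := Subtype.ext List.dropLast_concat
  right_inv p := by
    obtain ⟨q, s, hp, -⟩ := p.1.2.exists_eq_append_singleton
    have hs : s = 1 := by simpa [hp] using p.2
    ext1; ext1
    simp [hp, hs]

end DeutschPath

theorem deutschCount_succ_succ (n k : ℕ) :
    deutschCount (n + 1) (k + 1) = deutschCount n k + deutschCount (n + 1) (k + 3) := by
  rw [deutschCount_eq_card, ← Nat.card_congr
    (Equiv.sumCompl fun p : DeutschPath (n + 1) (k + 1) => p.1.getLast? = some 1), Nat.card_sum]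
  exact congrArg₂ (· + ·) (Nat.card_congr (DeutschPath.appendOneEquiv n k)).symm
    (Nat.card_congr (DeutschPath.lowerLastEquiv n (k + 1))).symm

theorem deutschCount_succ_zero (n : ℕ) : deutschCount (n + 1) 0 = deutschCount (n + 1) 2 := by
  rw [deutschCount_eq_card, ← Nat.card_congr (Equiv.subtypeUnivEquiv
      fun p : DeutschPath (n + 1) 0 => p.2.getLast?_ne_some_one_of_zero),
    ← Nat.card_congr (DeutschPath.lowerLastEquiv n 0)]
  rfl

theorem deutschCount_zero_zero : deutschCount 0 0 = 1 :=
  Nat.card_eq_one_iff_exists.2 ⟨⟨[], rfl, ⟨by simp, by simp⟩, rfl⟩,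
    fun p => Subtype.ext (List.length_eq_zero_iff.1 p.2.1)⟩

theorem deutschCount_eq_zero_of_lt {n k : ℕ} (h : n < k) : deutschCount n k = 0 := by
  rw [deutschCount_eq_card]
  have : IsEmpty (DeutschPath n k) := ⟨fun ⟨p, hl, hp, hsum⟩ => by
    have := hp.sum_le_length
    omega⟩
  exact Nat.card_of_isEmpty

open PowerSeries

section Recurrence

variable {R : Type*}

theorem eq_zero_of_deutsch_recurrence [Semiring R] {D : ℕ → R⟦X⟧} (h0 : D 0 = D 2)
    (hrec : ∀ k, D (k + 1) = X * D k + D (k + 3)) (hdvd : ∀ k, X ^ k ∣ D k) (k : ℕ) :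
    D k = 0 := by
  have hdvd_add : ∀ d k, X ^ (k + d) ∣ D k := by
    intro d
    induction d with
    | zero => exact hdvd
    | succ d ihd =>
      intro k
      induction k with
      | zero => exact h0 ▸ (pow_dvd_pow X (by omega)).trans (ihd 2)
      | succ k ihk =>
        rw [hrec k]
        refine dvd_add ?_ ((pow_dvd_pow X (by omega)).trans (ihd (k + 3)))
        rw [show k + 1 + (d + 1) = (k + (d + 1)) + 1 by omega, pow_succ']
        exact mul_dvd_mul_left X ihk
  ext n
  exact X_pow_dvd_iff.1 ((pow_dvd_pow X (by omega)).trans (hdvd_add (n + 1) k)) n n.lt_succ_self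

theorem mul_one_sub_pow_eq_X_pow_of_deutsch_recurrence [CommRing R] {t : R⟦X⟧}
    (ht : t * (1 - t) ^ 2 = X ^ 2) (ht0 : constantCoeff t = 0) {F : ℕ → R⟦X⟧}
    (h0 : F 0 = 1 + F 2) (hrec : ∀ k, F (k + 1) = X * F k + F (k + 3))
    (hdvd : ∀ k, X ^ k ∣ F k) (k : ℕ) :
    F k * (1 - t) ^ (k + 1) = X ^ k := by
  obtain ⟨u, hu⟩ : ∃ u, (1 - t) * u = 1 :=
    (isUnit_iff_constantCoeff.2 (by simp [ht0])).exists_right_inv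
  -- `t * (1 - t) ^ 2 = X ^ 2` divided by `(1 - t) ^ 3`
  have hu_eq : u = 1 + X ^ 2 * u ^ 3 := by
    linear_combination (1 - t * u * ((1 - t) * u + 1)) * hu + u ^ 3 * ht
  have hF : ∀ j, F j = X ^ j * u ^ (j + 1) := by
    intro j
    rw [← sub_eq_zero]
    refine eq_zero_of_deutsch_recurrence (D := fun i => F i - X ^ i * u ^ (i + 1)) ?_ ?_ ?_ j
    · linear_combination h0 - hu_eq
    · intro i
      linear_combination hrec i - X ^ (i + 1) * u ^ (i + 1) * hu_eq
    · exact fun i => dvd_sub (hdvd i) (dvd_mul_right _ _)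
  rw [hF, mul_assoc, ← mul_pow, mul_comm u, hu, one_pow, mul_one]

end Recurrence

noncomputable def deutschSeries (R : Type*) [Semiring R] (k : ℕ) : R⟦X⟧ :=
  mk fun n => (deutschCount n k : R)

section DeutschSeries

variable {R : Type*} [Semiring R]

theorem deutschSeries_zero : deutschSeries R 0 = 1 + deutschSeries R 2 := by
  ext (_ | n) <;>
    simp [deutschSeries, coeff_one, deutschCount_zero_zero, deutschCount_eq_zero_of_lt,
      deutschCount_succ_zero]

theorem deutschSeries_succ (k : ℕ) :
    deutschSeries R (k + 1) = X * deutschSeries R k + deutschSeries R (k + 3) := by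
  ext (_ | n)
  · simp [deutschSeries, deutschCount_eq_zero_of_lt]
  · simp only [deutschSeries, coeff_mk, map_add, coeff_succ_X_mul]
    rw [deutschCount_succ_succ, Nat.cast_add]

theorem X_pow_dvd_deutschSeries (k : ℕ) : X ^ k ∣ deutschSeries R k :=
  X_pow_dvd_iff.2 fun n hn => by simp [deutschSeries, deutschCount_eq_zero_of_lt hn]

end DeutschSeries

/-- With t the formal power series solution of t(1-t)² = z²,
t(0) = 0 (the unique such solution, t = z² + O(z⁴)), the generating function
f_k(z) = Σₙ aₙ,ₖ zⁿ of Deutsch paths ending at level k equals zᵏ/(1-t)ᵏ⁺¹;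
equivalently f_k · (1-t)ᵏ⁺¹ = zᵏ. -/
theorem deutschCount_generating_function (t : PowerSeries ℚ)
    (ht : t * (1 - t) ^ 2 = PowerSeries.X ^ 2)
    (ht0 : PowerSeries.constantCoeff t = 0) :
    ∀ k : ℕ,
      (PowerSeries.mk fun n => (deutschCount n k : ℚ)) * (1 - t) ^ (k + 1) =
        PowerSeries.X ^ k :=
  mul_one_sub_pow_eq_X_pow_of_deutsch_recurrence ht ht0 deutschSeries_zero deutschSeries_succ
    X_pow_dvd_deutschSeries
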